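/- arXiv:2011.08950 — 2 statements merged into one kernel-verified Lean document; each statement's English description precedes it below -/
import Mathlib

section
/- Let X be a topological space, let α : X → X be an aperiodic Borel measurable bijection with Borel measurable inverse, let F be a Banach function space on X satisfying condition Ω_α, and let w and 1/w both be weights on X. If the set 𝒫((C^{(n)}_{α,w})_{n∈ℕ₀}) of periodic elements is dense in F and lim_{n→∞} T^n_{α,w} f = 0 in F for every f ∈ 𝒫((C^{(n)}_{α,w})_{n∈ℕ₀}), then for every compact subset K of X there exist a sequence (D_k)_{k=1}^∞ of Borel subsets of K and a strictly increasing sequence (n_k) of positive integers such that lim_{k→∞} ‖χ_{K∖D_k}‖_F = 0 and lim_{k→∞} ‖χ_{D_k} · (∏_{s=0}^{n_k−1} (w∘α^{s}))^{−1}‖_F = 0. -/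
open Filter Topology

/-- A Banach function space on `X`: a Banach space `F` together with an injective linear
embedding into the Borel measurable functions `X → ℂ`. -/
structure BanachFunctionSpace (X : Type*) [TopologicalSpace X] [MeasurableSpace X]
    (F : Type*) [NormedAddCommGroup F] [NormedSpace ℂ F] [CompleteSpace F] where
  toFunL : F →ₗ[ℂ] (X → ℂ)
  injective : Function.Injective toFunL
  measurable' : ∀ f : F, Measurable (toFunL f)

namespace BanachFunctionSpace

variable {X : Type*} [TopologicalSpace X] [MeasurableSpace X]
  {F : Type*} [NormedAddCommGroup F] [NormedSpace ℂ F] [CompleteSpace F]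

/-- `F` is solid: it contains, with controlled norm, every measurable function dominated
pointwise by a member of `F`. -/
def IsSolid (B : BanachFunctionSpace X F) : Prop :=
  ∀ (f : F) (g : X → ℂ), Measurable g → (∀ x, ‖g x‖ ≤ ‖B.toFunL f x‖) →
    ∃ g' : F, B.toFunL g' = g ∧ ‖g'‖ ≤ ‖f‖

/-- `F` is `α`-invariant: composition with `α` and `α⁻¹` preserves membership and the norm. -/
def IsInvariant (B : BanachFunctionSpace X F) (α : X ≃ X) : Prop :=
  ∀ f : F, (∃ g : F, B.toFunL g = B.toFunL f ∘ ⇑α ∧ ‖g‖ = ‖f‖) ∧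
    (∃ g : F, B.toFunL g = B.toFunL f ∘ ⇑α.symm ∧ ‖g‖ = ‖f‖)

/-- The characteristic function of every compact subset of `X` belongs to `F`. -/
def HasCompactIndicators (B : BanachFunctionSpace X F) : Prop :=
  ∀ E : Set X, IsCompact E → ∃ f : F, B.toFunL f = Set.indicator E 1

/-- The bounded compactly supported functions in `F` are dense in `F`. -/
def DenseBoundedCompact (B : BanachFunctionSpace X F) : Prop :=
  Dense {f : F | (∃ C : ℝ, ∀ x, ‖B.toFunL f x‖ ≤ C) ∧
    ∃ K : Set X, IsCompact K ∧ ∀ x ∉ K, B.toFunL f x = 0}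

/-- Condition `Ω_α`. -/
def ConditionOmega (B : BanachFunctionSpace X F) (α : X ≃ X) : Prop :=
  B.IsSolid ∧ B.IsInvariant α ∧ B.HasCompactIndicators ∧ B.DenseBoundedCompact

end BanachFunctionSpace

/-- `w` and `1/w` are both weights: `w` is Borel measurable, bounded above, and bounded
away from `0`. -/
def IsWeightPair {X : Type*} [MeasurableSpace X] (w : X → ℝ) : Prop :=
  Measurable w ∧ (∃ C : ℝ, ∀ x, w x ≤ C) ∧ ∃ c : ℝ, 0 < c ∧ ∀ x, c ≤ w x

/-- `α` is aperiodic: every compact set is eventually moved off itself by the iterates. -/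
def Aperiodic {X : Type*} [TopologicalSpace X] (α : X ≃ X) : Prop :=
  ∀ K : Set X, IsCompact K → ∃ N : ℕ, 0 < N ∧ ∀ n ≥ N, (⇑α)^[n] '' K ∩ K = ∅

/-- The cosine operator sequence `C⁽ⁿ⁾ = (1/2)(Tⁿ + Sⁿ)`. -/
noncomputable def cosOp {F : Type*} [NormedAddCommGroup F] [NormedSpace ℂ F]
    (T S : F →L[ℂ] F) (n : ℕ) : F →L[ℂ] F :=
  (2 : ℂ)⁻¹ • (T ^ n + S ^ n)

/-- The set of periodic elements of a sequence of operators. -/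
def periodicSet {F : Type*} [NormedAddCommGroup F] [NormedSpace ℂ F]
    (C : ℕ → F →L[ℂ] F) : Set F :=
  {f | ∃ N : ℕ, 0 < N ∧ ∀ k : ℕ, 0 < k → C (k * N) f = f}

/-- Topological transitivity of a sequence of operators. -/
def TopTransitive {F : Type*} [NormedAddCommGroup F] [NormedSpace ℂ F]
    (C : ℕ → F →L[ℂ] F) : Prop :=
  ∀ U V : Set F, IsOpen U → IsOpen V → U.Nonempty → V.Nonempty →
    ∃ n : ℕ, 0 < n ∧ (⇑(C n) '' U ∩ V).Nonempty

/-- A sequence of operators is chaotic if it is topologically transitive and its set of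
periodic elements is dense. -/
def IsChaotic {F : Type*} [NormedAddCommGroup F] [NormedSpace ℂ F]
    (C : ℕ → F →L[ℂ] F) : Prop :=
  TopTransitive C ∧ Dense (periodicSet C)

/-!
Let `u = χ_K` and approximate `u` by a periodic element `f` of the cosine sequence. Taking `n` a
multiple of the period of `f` large enough, `Tⁿ f` is small and `αⁿ(K)` misses `K`; periodicity
gives `Sⁿ f = 2f - Tⁿ f`. With `D = K ∩ {|f| ≥ 1/2}`: on `K \ D` we have `1 ≤ 2|f - u|`, and for
`x ∈ D` the identity `(Sⁿ f)(αⁿ x) = Wₙ(x)⁻¹ f(x)`, where `Wₙ = ∏_{s<n} w ∘ αˢ`, together with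
`u(αⁿ x) = 0` gives `Wₙ(x)⁻¹ ≤ 2 |(2(f - u) - Tⁿ f)(αⁿ x)|`. Solidity and `α`-invariance turn
these pointwise bounds into norm bounds, and a diagonal choice of `n` gives the sequences.
-/

section Operators

variable {F : Type*} [NormedAddCommGroup F] [NormedSpace ℂ F]

theorem frequently_apply_eq_of_mem_periodicSet {C : ℕ → F →L[ℂ] F} {f : F}
    (hf : f ∈ periodicSet C) : ∃ᶠ n in atTop, C n f = f := by
  obtain ⟨N, hN, hper⟩ := hf
  refine frequently_atTop.2 fun a => ⟨(a + 1) * N, ?_, hper _ a.succ_pos⟩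
  nlinarith

theorem pow_apply_eq_of_cosOp_apply_eq_self {T S : F →L[ℂ] F} {n : ℕ} {f : F}
    (h : cosOp T S n f = f) : (S ^ n) f = (2 : ℂ) • f - (T ^ n) f := by
  rw [eq_sub_iff_add_eq']
  conv_rhs => rw [← h, cosOp, smul_apply, smul_smul]
  norm_num

end Operators

theorem Aperiodic.eventually_iterate_notMem {X : Type*} [TopologicalSpace X] {α : X ≃ X}
    (hα : Aperiodic α) {K : Set X} (hK : IsCompact K) :
    ∀ᶠ n in atTop, ∀ x ∈ K, (⇑α)^[n] x ∉ K := by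
  obtain ⟨N, -, hN⟩ := hα K hK
  filter_upwards [eventually_ge_atTop N] with n hn x hx hxK
  exact (Set.eq_empty_iff_forall_notMem.1 (hN n hn)) _ ⟨⟨x, hx, rfl⟩, hxK⟩

namespace BanachFunctionSpace

variable {X : Type*} [TopologicalSpace X] [MeasurableSpace X]
  {F : Type*} [NormedAddCommGroup F] [NormedSpace ℂ F] [CompleteSpace F]
  {B : BanachFunctionSpace X F}

theorem measurableSet_of_toFunL_eq_indicator {u : F} {K : Set X}
    (hu : B.toFunL u = K.indicator 1) : MeasurableSet K :=
  (measurable_indicator_const_iff (1 : ℂ)).1 (hu ▸ B.measurable' u)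

theorem measurableSet_inter_setOf_le_norm (B : BanachFunctionSpace X F) {K : Set X}
    (hK : MeasurableSet K) (f : F) (c : ℝ) :
    MeasurableSet (K ∩ {x | c ≤ ‖B.toFunL f x‖}) :=
  hK.inter (measurableSet_le measurable_const (B.measurable' f).norm)

theorem IsSolid.exists_toFunL_eq_of_norm_le (hB : B.IsSolid) {f : F} {g : X → ℂ} {c : ℝ}
    (hc : 0 ≤ c) (hg : Measurable g) (hle : ∀ x, ‖g x‖ ≤ c * ‖B.toFunL f x‖) :
    ∃ g' : F, B.toFunL g' = g ∧ ‖g'‖ ≤ c * ‖f‖ := by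
  have hnorm : ‖(c : ℂ)‖ = c := by rw [Complex.norm_real, Real.norm_of_nonneg hc]
  obtain ⟨g', hg', hg'le⟩ := hB ((c : ℂ) • f) g hg fun x => by
    simpa only [map_smul, Pi.smul_apply, norm_smul, hnorm] using hle x
  exact ⟨g', hg', hg'le.trans_eq (by rw [norm_smul, hnorm])⟩

theorem IsInvariant.exists_toFunL_eq_comp_iterate {α : X ≃ X} (hB : B.IsInvariant α)
    (n : ℕ) (f : F) : ∃ g : F, B.toFunL g = B.toFunL f ∘ (⇑α)^[n] ∧ ‖g‖ = ‖f‖ := by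
  induction n generalizing f with
  | zero => exact ⟨f, rfl, rfl⟩
  | succ n ih =>
    obtain ⟨g, hg, hgf⟩ := ih f
    obtain ⟨⟨g', hg', hg'g⟩, -⟩ := hB g
    exact ⟨g', by rw [hg', hg, Function.iterate_succ]; rfl, hg'g.trans hgf⟩

section WeightedTranslation

variable {α : X → X} {w : X → ℝ} {T S : F →L[ℂ] F}

theorem toFunL_pow_apply
    (hT : ∀ (f : F) (x : X), B.toFunL (T f) x = (w x : ℂ) * B.toFunL f (α x))
    (n : ℕ) (f : F) (x : X) :
    B.toFunL ((T ^ n) f) x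
      = ((∏ s ∈ Finset.range n, w (α^[s] x) : ℝ) : ℂ) * B.toFunL f (α^[n] x) := by
  induction n generalizing f with
  | zero => simp
  | succ n ih =>
    rw [pow_succ, mul_apply_eq_comp, ih, hT, Finset.prod_range_succ,
      Function.iterate_succ_apply']
    push_cast
    ring

theorem toFunL_inv_pow_apply_iterate
    (hT : ∀ (f : F) (x : X), B.toFunL (T f) x = (w x : ℂ) * B.toFunL f (α x))
    (hTS : ∀ f : F, T (S f) = f) (hw : ∀ x, w x ≠ 0) (n : ℕ) (f : F) (x : X) :
    B.toFunL ((S ^ n) f) (α^[n] x)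
      = (((∏ s ∈ Finset.range n, w (α^[s] x))⁻¹ : ℝ) : ℂ) * B.toFunL f x := by
  have hTSn : (T ^ n) ((S ^ n) f) = f := by
    rw [← mul_apply_eq_comp, pow_mul_pow_eq_one n (ContinuousLinearMap.ext hTS)]
    rfl
  have hprod : ((∏ s ∈ Finset.range n, w (α^[s] x) : ℝ) : ℂ) ≠ 0 :=
    Complex.ofReal_ne_zero.2 (Finset.prod_ne_zero_iff.2 fun s _ => hw _)
  conv_rhs => rw [← hTSn, toFunL_pow_apply hT, Complex.ofReal_inv, inv_mul_cancel_left₀ hprod]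

end WeightedTranslation

theorem IsSolid.exists_toFunL_eq_indicator_diff (hB : B.IsSolid) {K : Set X} {u : F}
    (hu : B.toFunL u = K.indicator 1) (f : F) :
    ∃ g : F, B.toFunL g = (K \ (K ∩ {x | 1 / 2 ≤ ‖B.toFunL f x‖})).indicator 1 ∧
      ‖g‖ ≤ 2 * ‖f - u‖ := by
  have hKm := measurableSet_of_toFunL_eq_indicator hu
  have hDm := B.measurableSet_inter_setOf_le_norm hKm f (1 / 2)
  refine hB.exists_toFunL_eq_of_norm_le zero_le_two
    (measurable_const.indicator (hKm.diff hDm)) fun x => ?_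
  by_cases hx : x ∈ K \ (K ∩ {x | 1 / 2 ≤ ‖B.toFunL f x‖})
  · have hfx : ‖B.toFunL f x‖ < 1 / 2 := not_le.1 fun h => hx.2 ⟨hx.1, h⟩
    have hux : B.toFunL u x = 1 := by rw [hu, Set.indicator_of_mem hx.1, Pi.one_apply]
    have := norm_sub_norm_le (B.toFunL u x) (B.toFunL f x)
    rw [hux, norm_one] at this
    rw [Set.indicator_of_mem hx, Pi.one_apply, norm_one, map_sub, Pi.sub_apply, norm_sub_rev,
      hux]
    linarith
  · rw [Set.indicator_of_notMem hx, norm_zero]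
    positivity

theorem exists_toFunL_eq_indicator_inv_prod (hB : B.IsSolid) {α : X ≃ X}
    (hinv : B.IsInvariant α) (hmα : Measurable α) {w : X → ℝ} (hwm : Measurable w)
    (hw : ∀ x, 0 < w x) {T S : F →L[ℂ] F}
    (hT : ∀ (f : F) (x : X), B.toFunL (T f) x = (w x : ℂ) * B.toFunL f (α x))
    (hTS : ∀ f : F, T (S f) = f) {K : Set X} {u : F} (hu : B.toFunL u = K.indicator 1)
    {n : ℕ} (hn : ∀ x ∈ K, (⇑α)^[n] x ∉ K) {f : F}
    (hf : (S ^ n) f = (2 : ℂ) • f - (T ^ n) f) :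
    ∃ h : F, B.toFunL h = (K ∩ {x | 1 / 2 ≤ ‖B.toFunL f x‖}).indicator
        (fun x => (((∏ s ∈ Finset.range n, w ((⇑α)^[s] x))⁻¹ : ℝ) : ℂ)) ∧
      ‖h‖ ≤ 2 * ‖(2 : ℂ) • (f - u) - (T ^ n) f‖ := by
  obtain ⟨q, hq, hqn⟩ := hinv.exists_toFunL_eq_comp_iterate n ((2 : ℂ) • (f - u) - (T ^ n) f)
  rw [← hqn]
  have hDm :=
    B.measurableSet_inter_setOf_le_norm (measurableSet_of_toFunL_eq_indicator hu) f (1 / 2)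
  have hprodm : Measurable fun x => ∏ s ∈ Finset.range n, w ((⇑α)^[s] x) :=
    Finset.measurable_prod _ fun s _ => hwm.comp (hmα.iterate s)
  refine hB.exists_toFunL_eq_of_norm_le zero_le_two
    ((Complex.measurable_ofReal.comp hprodm.inv).indicator hDm) fun x => ?_
  by_cases hx : x ∈ K ∩ {x | 1 / 2 ≤ ‖B.toFunL f x‖}
  · have hux : B.toFunL u ((⇑α)^[n] x) = 0 := by
      rw [hu, Set.indicator_of_notMem (hn x hx.1)]
    have hqx : B.toFunL q x
        = (((∏ s ∈ Finset.range n, w ((⇑α)^[s] x))⁻¹ : ℝ) : ℂ) * B.toFunL f x := by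
      rw [hq, ← toFunL_inv_pow_apply_iterate hT hTS (fun x => (hw x).ne'), hf]
      simp only [Function.comp_apply, map_sub, map_smul, Pi.sub_apply, Pi.smul_apply, hux,
        sub_zero]
    have hW : 0 ≤ (∏ s ∈ Finset.range n, w ((⇑α)^[s] x))⁻¹ :=
      inv_nonneg.2 (Finset.prod_nonneg fun s _ => (hw _).le)
    have hfx : 1 / 2 ≤ ‖B.toFunL f x‖ := hx.2
    rw [Set.indicator_of_mem hx, hqx, norm_mul, Complex.norm_real, Real.norm_of_nonneg hW]
    nlinarith
  · rw [Set.indicator_of_notMem hx, norm_zero]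
    positivity

theorem frequently_exists_indicator_norm_le (hB : B.IsSolid) {α : X ≃ X}
    (hinv : B.IsInvariant α) (hα : Aperiodic α) (hmα : Measurable α) {w : X → ℝ}
    (hwm : Measurable w) (hw : ∀ x, 0 < w x) {T S : F →L[ℂ] F}
    (hT : ∀ (f : F) (x : X), B.toFunL (T f) x = (w x : ℂ) * B.toFunL f (α x))
    (hTS : ∀ f : F, T (S f) = f) (hdense : Dense (periodicSet (cosOp T S)))
    (hlim : ∀ f ∈ periodicSet (cosOp T S), Tendsto (fun n : ℕ => (T ^ n) f) atTop (𝓝 0))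
    {K : Set X} (hK : IsCompact K) {u : F} (hu : B.toFunL u = K.indicator 1)
    {ε : ℝ} (hε : 0 < ε) :
    ∃ᶠ n in atTop, ∃ (D : Set X) (g h : F), MeasurableSet D ∧ D ⊆ K ∧
      B.toFunL g = (K \ D).indicator 1 ∧ ‖g‖ ≤ ε ∧
      B.toFunL h = D.indicator
        (fun x => (((∏ s ∈ Finset.range n, w ((⇑α)^[s] x))⁻¹ : ℝ) : ℂ)) ∧ ‖h‖ ≤ ε := by
  obtain ⟨f, hfper, hfu⟩ := hdense.exists_dist_lt u (by positivity : 0 < ε / 6)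
  rw [dist_comm, dist_eq_norm] at hfu
  have hTf := NormedAddGroup.tendsto_nhds_zero.1 (hlim f hfper) (ε / 6) (by positivity)
  refine ((frequently_apply_eq_of_mem_periodicSet hfper).and_eventually
    (hTf.and (hα.eventually_iterate_notMem hK))).mono ?_
  rintro n ⟨hper, hTn, hnK⟩
  obtain ⟨g, hg, hgle⟩ := hB.exists_toFunL_eq_indicator_diff hu f
  obtain ⟨h, hh, hhle⟩ := exists_toFunL_eq_indicator_inv_prod hB hinv hmα hwm hw hT hTS hu hnK
    (pow_apply_eq_of_cosOp_apply_eq_self hper)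
  have hq : ‖(2 : ℂ) • (f - u) - (T ^ n) f‖ ≤ 2 * ‖f - u‖ + ‖(T ^ n) f‖ :=
    (norm_sub_le _ _).trans_eq (by rw [norm_smul]; norm_num)
  exact ⟨_, g, h,
    B.measurableSet_inter_setOf_le_norm (measurableSet_of_toFunL_eq_indicator hu) f _,
    Set.inter_subset_left, hg, by linarith, hh, by linarith⟩

end BanachFunctionSpace

theorem stmt2_general {X : Type*} [TopologicalSpace X] [MeasurableSpace X]
    {F : Type*} [NormedAddCommGroup F] [NormedSpace ℂ F] [CompleteSpace F]
    (B : BanachFunctionSpace X F) (α : X ≃ X)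
    (hmα : Measurable (⇑α))
    (hα : Aperiodic α) (hΩ : B.ConditionOmega α)
    (w : X → ℝ) (hw : IsWeightPair w) (T : F →L[ℂ] F)
    (hT : ∀ (f : F) (x : X), B.toFunL (T f) x = (w x : ℂ) * B.toFunL f (α x)) (S : F →L[ℂ] F) (hTS : ∀ f : F, T (S f) = f)
    (hdense : Dense (periodicSet (cosOp T S)))
    (hlim : ∀ f ∈ periodicSet (cosOp T S), Tendsto (fun n : ℕ => (T ^ n) f) atTop (𝓝 0)) :
    ∀ K : Set X, IsCompact K →
      ∃ (D : ℕ → Set X) (nk : ℕ → ℕ) (g h : ℕ → F),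
        (∀ k, MeasurableSet (D k)) ∧ (∀ k, D k ⊆ K) ∧
        StrictMono nk ∧ (∀ k, 0 < nk k) ∧
        (∀ k, B.toFunL (g k) = Set.indicator (K \ D k) 1) ∧
        Tendsto (fun k => ‖g k‖) atTop (𝓝 0) ∧
        (∀ k, B.toFunL (h k) = Set.indicator (D k)
          (fun x => (((∏ s ∈ Finset.range (nk k), w ((⇑α)^[s] x))⁻¹ : ℝ) : ℂ))) ∧
        Tendsto (fun k => ‖h k‖) atTop (𝓝 0) := by
  intro K hK
  obtain ⟨hB, hinv, hci, -⟩ := hΩ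
  obtain ⟨hwm, -, c, hc, hcw⟩ := hw
  obtain ⟨u, hu⟩ := hci K hK
  obtain ⟨nk, hmono, hP⟩ := extraction_forall_of_frequently fun k : ℕ =>
    (BanachFunctionSpace.frequently_exists_indicator_norm_le hB hinv hα hmα hwm
      (fun x => hc.trans_le (hcw x)) hT hTS hdense hlim hK hu
      (Nat.one_div_pos_of_nat (n := k))).and_eventually
      (eventually_gt_atTop 0)
  choose D g h hD hDK hg hgle hh hhle using fun k => (hP k).1
  exact ⟨D, nk, g, h, hD, hDK, hmono, fun k => (hP k).2, hg,
    squeeze_zero (fun _ => norm_nonneg _) hgle tendsto_one_div_add_atTop_nhds_zero_nat, hh,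
    squeeze_zero (fun _ => norm_nonneg _) hhle tendsto_one_div_add_atTop_nhds_zero_nat⟩

/-- necessary condition for density of the periodic elements of the cosine
operator sequence together with `Tⁿf → 0` on them. -/
theorem stmt2 {X : Type*} [TopologicalSpace X] [MeasurableSpace X] [BorelSpace X]
    {F : Type*} [NormedAddCommGroup F] [NormedSpace ℂ F] [CompleteSpace F]
    (B : BanachFunctionSpace X F) (α : X ≃ X)
    (hmα : Measurable (⇑α)) (hmαs : Measurable (⇑α.symm))
    (hα : Aperiodic α) (hΩ : B.ConditionOmega α)
    (w : X → ℝ) (hw : IsWeightPair w) (T : F →L[ℂ] F)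
    (hT : ∀ (f : F) (x : X), B.toFunL (T f) x = (w x : ℂ) * B.toFunL f (α x)) (S : F →L[ℂ] F) (hST : ∀ f : F, S (T f) = f) (hTS : ∀ f : F, T (S f) = f)
    (hdense : Dense (periodicSet (cosOp T S)))
    (hlim : ∀ f ∈ periodicSet (cosOp T S), Tendsto (fun n : ℕ => (T ^ n) f) atTop (𝓝 0)) :
    ∀ K : Set X, IsCompact K →
      ∃ (D : ℕ → Set X) (nk : ℕ → ℕ) (g h : ℕ → F),
        (∀ k, MeasurableSet (D k)) ∧ (∀ k, D k ⊆ K) ∧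
        StrictMono nk ∧ (∀ k, 0 < nk k) ∧
        (∀ k, B.toFunL (g k) = Set.indicator (K \ D k) 1) ∧
        Tendsto (fun k => ‖g k‖) atTop (𝓝 0) ∧
        (∀ k, B.toFunL (h k) = Set.indicator (D k)
          (fun x => (((∏ s ∈ Finset.range (nk k), w ((⇑α)^[s] x))⁻¹ : ℝ) : ℂ))) ∧
        Tendsto (fun k => ‖h k‖) atTop (𝓝 0) :=
  stmt2_general B α hmα hα hΩ w hw T hT S hTS hdense hlim
end

section
/- Let X be a topological space, let α : X → X be a bijection such that α and α⁻¹ are Borel measurable, let F be a Banach function space on X satisfying condition Ω_α, and let w and 1/w both be weights on X. Suppose there exist a nonempty compact subset K of X and N > 0 such that α^n(K) ∩ K = ∅ for all n ≥ N. If the adjoint sequence (C^{(n)*}_{α,w})_{n∈ℕ₀} is chaotic on the dual space F′, then inf_{x∈X} w(x) < 1 < sup_{x∈X} w(x). -/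
open Filter Topology

/-- The adjoint `T* φ = φ ∘ T` of a bounded operator, acting on the dual space. -/
noncomputable def adjOp {F : Type*} [NormedAddCommGroup F] [NormedSpace ℂ F]
    (T : F →L[ℂ] F) : (F →L[ℂ] ℂ) →L[ℂ] (F →L[ℂ] ℂ) :=
  (ContinuousLinearMap.compL ℂ F F ℂ).flip T

/-!
Let `φ ≠ 0` be a periodic point, of period `M`, of the adjoint cosine sequence, and suppose `S`
is a contraction. Then `φ ∘ Tᴹ + φ ∘ Sᴹ = 2φ`, so `j ↦ φ ∘ S^(Mj)` is a bounded arithmetic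
progression, hence constant. The orbit `n ↦ φ ∘ Sⁿ` is therefore finite, and it avoids `0`
because `S` is invertible. On the other hand `Cₙ Sⁿ = (1 + S²ⁿ)/2` is a contraction, so
transitivity yields `n` with `‖φ ∘ Sⁿ‖` arbitrarily small. If `w ≥ 1` then `S` is a contraction
on the solid, `α`-invariant space, and if `w ≤ 1` then `T` is; `Cₙ` is symmetric in `T` and `S`.
-/

theorem eq_of_isBounded_range_of_sub_eq_sub {E : Type*} [NormedAddCommGroup E] [NormedSpace ℝ E]
    {a : ℕ → E} (hrec : ∀ j, a (j + 2) - a (j + 1) = a (j + 1) - a j)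
    (hb : Bornology.IsBounded (Set.range a)) : a 1 = a 0 := by
  have hdiff : ∀ j, a (j + 1) - a j = a 1 - a 0 := by
    intro j
    induction j with
    | zero => rfl
    | succ j ih => rw [hrec, ih]
  have hlin : ∀ j : ℕ, a j - a 0 = (j : ℝ) • (a 1 - a 0) := by
    intro j
    induction j with
    | zero => simp
    | succ j ih => rw [← sub_add_sub_cancel _ (a j), hdiff, ih]; push_cast; module
  obtain ⟨C, hC⟩ := hb.exists_norm_le
  by_contra hne
  have hd : 0 < ‖a 1 - a 0‖ := norm_pos_iff.mpr (sub_ne_zero.mpr hne)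
  obtain ⟨j, hj⟩ := exists_nat_gt (2 * C / ‖a 1 - a 0‖)
  have : (j : ℝ) * ‖a 1 - a 0‖ ≤ 2 * C := by
    calc (j : ℝ) * ‖a 1 - a 0‖ = ‖a j - a 0‖ := by
          rw [hlin j, norm_smul, Real.norm_natCast]
      _ ≤ ‖a j‖ + ‖a 0‖ := norm_sub_le _ _
      _ ≤ 2 * C := by linarith [hC _ ⟨j, rfl⟩, hC _ ⟨0, rfl⟩]
  rw [div_lt_iff₀ hd] at hj
  linarith

section CosineOperators

variable {F : Type*} [NormedAddCommGroup F] [NormedSpace ℂ F]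

theorem adjOp_apply (T : F →L[ℂ] F) (φ : F →L[ℂ] ℂ) : adjOp T φ = φ.comp T := rfl

theorem norm_pow_le_one_of_norm_le_one {U : F →L[ℂ] F} (hU : ‖U‖ ≤ 1) (n : ℕ) : ‖U ^ n‖ ≤ 1 := by
  induction n with
  | zero => exact ContinuousLinearMap.norm_id_le
  | succ n ih => exact (norm_mul_le _ _).trans (mul_le_one₀ ih (norm_nonneg _) hU)

theorem cosOp_comm (T S : F →L[ℂ] F) (n : ℕ) : cosOp T S n = cosOp S T n := by
  rw [cosOp, cosOp, add_comm]

theorem comp_pow_eq_self_of_comp_eq_self {U : F →L[ℂ] F} {φ : F →L[ℂ] ℂ} (h : φ.comp U = φ)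
    (k : ℕ) : φ.comp (U ^ k) = φ := by
  induction k with
  | zero => rfl
  | succ k ih =>
    rw [pow_succ', ContinuousLinearMap.mul_def, ← ContinuousLinearMap.comp_assoc, h, ih]

theorem comp_eq_self_of_comp_add_comp_eq {U V : F →L[ℂ] F} (hVU : V * U = 1) (hU : ‖U‖ ≤ 1)
    {φ : F →L[ℂ] ℂ} (hφ : φ.comp V + φ.comp U = (2 : ℂ) • φ) : φ.comp U = φ := by
  have hrec : ∀ j, φ.comp (U ^ (j + 2)) - φ.comp (U ^ (j + 1)) =
      φ.comp (U ^ (j + 1)) - φ.comp (U ^ j) := by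
    intro j
    have h := congrArg (·.comp (U ^ (j + 1))) hφ
    simp only [ContinuousLinearMap.add_comp, ContinuousLinearMap.smul_comp,
      ContinuousLinearMap.comp_assoc, ← ContinuousLinearMap.mul_def] at h
    rw [pow_succ' U j, ← mul_assoc, hVU, one_mul, ← pow_succ', ← pow_succ'] at h
    rw [sub_eq_sub_iff_add_eq_add, ← two_smul ℂ, ← h]
    abel
  have hb : Bornology.IsBounded (Set.range fun j => φ.comp (U ^ j)) := by
    refine isBounded_iff_forall_norm_le.mpr ⟨‖φ‖, ?_⟩
    rintro _ ⟨j, rfl⟩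
    exact (φ.opNorm_comp_le _).trans
      (mul_le_of_le_one_right (norm_nonneg φ) (norm_pow_le_one_of_norm_le_one hU j))
  simpa [ContinuousLinearMap.one_def] using eq_of_isBounded_range_of_sub_eq_sub hrec hb

theorem exists_norm_comp_pow_le_of_topTransitive {T S : F →L[ℂ] F} (hTS : T * S = 1)
    (hS : ‖S‖ ≤ 1) (htr : TopTransitive fun n => adjOp (cosOp T S n)) (φ : F →L[ℂ] ℂ) {ε : ℝ}
    (hε : 0 < ε) : ∃ n, ‖φ.comp (S ^ n)‖ ≤ ε := by
  obtain ⟨n, -, _, ⟨ψ, hψ, rfl⟩, hψφ⟩ := htr _ _ Metric.isOpen_ball Metric.isOpen_ball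
    ⟨0, Metric.mem_ball_self (half_pos hε)⟩ ⟨φ, Metric.mem_ball_self (half_pos hε)⟩
  rw [mem_ball_zero_iff] at hψ
  rw [Metric.mem_ball, dist_eq_norm, norm_sub_rev] at hψφ
  have hcos : cosOp T S n * S ^ n = (2 : ℂ)⁻¹ • (1 + S ^ (n + n)) := by
    rw [cosOp, smul_mul_assoc, add_mul, pow_mul_pow_eq_one n hTS, pow_add]
  have hcos_norm : ‖cosOp T S n * S ^ n‖ ≤ 1 := by
    rw [hcos, norm_smul]
    calc ‖(2 : ℂ)⁻¹‖ * ‖1 + S ^ (n + n)‖ ≤ 2⁻¹ * (1 + 1) := by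
          rw [norm_inv, Complex.norm_ofNat]
          gcongr
          exact (norm_add_le (1 : F →L[ℂ] F) _).trans (add_le_add
            ContinuousLinearMap.norm_id_le (norm_pow_le_one_of_norm_le_one hS _))
      _ = 1 := by norm_num
  have hsplit : φ.comp (S ^ n) =
      (φ - adjOp (cosOp T S n) ψ).comp (S ^ n) + ψ.comp (cosOp T S n * S ^ n) := by
    rw [adjOp_apply, ContinuousLinearMap.sub_comp, ContinuousLinearMap.comp_assoc,
      ContinuousLinearMap.mul_def, sub_add_cancel]
  refine ⟨n, ?_⟩
  calc ‖φ.comp (S ^ n)‖ ≤ ‖φ - adjOp (cosOp T S n) ψ‖ * ‖S ^ n‖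
        + ‖ψ‖ * ‖cosOp T S n * S ^ n‖ := by
        rw [hsplit]
        exact (norm_add_le _ _).trans (add_le_add (ContinuousLinearMap.opNorm_comp_le _ _)
          (ContinuousLinearMap.opNorm_comp_le _ _))
    _ ≤ ε / 2 * 1 + ε / 2 * 1 :=
        add_le_add (mul_le_mul hψφ.le (norm_pow_le_one_of_norm_le_one hS n) (norm_nonneg _)
          (half_pos hε).le) (mul_le_mul hψ.le hcos_norm (norm_nonneg _) (half_pos hε).le)
    _ = ε := by ring

theorem not_isChaotic_adjOp_cosOp [Nontrivial F] {T S : F →L[ℂ] F} (hST : S * T = 1)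
    (hTS : T * S = 1) (hS : ‖S‖ ≤ 1) : ¬ IsChaotic fun n => adjOp (cosOp T S n) := by
  rintro ⟨htr, hper⟩
  have : Nontrivial (F →L[ℂ] ℂ) := by
    obtain ⟨x, hx⟩ := exists_ne (0 : F)
    obtain ⟨g, hg, -⟩ := exists_dual_vector ℂ x (norm_ne_zero_iff.mpr hx)
    exact ⟨g, 0, fun h => by simp [h] at hg⟩
  obtain ⟨φ, ⟨M, hM, hφM⟩, hφ0 : φ ≠ 0⟩ := (hper.sdiff_singleton 0).nonempty
  have hφU : φ.comp (S ^ M) = φ := by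
    refine comp_eq_self_of_comp_add_comp_eq (pow_mul_pow_eq_one M hTS)
      (norm_pow_le_one_of_norm_le_one hS M) ?_
    have h : φ.comp (cosOp T S M) = φ := by
      simpa only [one_mul, adjOp_apply] using hφM 1 one_pos
    rw [cosOp, ContinuousLinearMap.comp_smul, ContinuousLinearMap.comp_add] at h
    conv_rhs => rw [← h, smul_smul]
    norm_num
  have hperiodic : ∀ n, φ.comp (S ^ n) = φ.comp (S ^ (n % M)) := by
    intro n
    conv_lhs => rw [← Nat.div_add_mod n M, pow_add, pow_mul, ContinuousLinearMap.mul_def,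
      ← ContinuousLinearMap.comp_assoc, comp_pow_eq_self_of_comp_eq_self hφU]
  set A := (fun t => φ.comp (S ^ t)) '' Set.Iio M
  have hA_closed : IsClosed A := ((Set.finite_Iio M).image _).isClosed
  have hA_zero : (0 : F →L[ℂ] ℂ) ∉ A := by
    rintro ⟨t, -, ht⟩
    apply hφ0
    rw [← ContinuousLinearMap.comp_id φ, ← ContinuousLinearMap.one_def,
      ← pow_mul_pow_eq_one t hST, ContinuousLinearMap.mul_def, ← ContinuousLinearMap.comp_assoc]
    simp only at ht
    rw [ht, ContinuousLinearMap.zero_comp]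
  apply hA_zero
  rw [← hA_closed.closure_eq, Metric.mem_closure_iff]
  intro ε hε
  obtain ⟨n, hn⟩ := exists_norm_comp_pow_le_of_topTransitive hTS hS htr φ (half_pos hε)
  exact ⟨φ.comp (S ^ (n % M)), ⟨n % M, Nat.mod_lt n hM, rfl⟩,
    by rw [dist_zero_left, ← hperiodic]; linarith⟩

end CosineOperators

namespace BanachFunctionSpace

variable {X : Type*} [TopologicalSpace X] [MeasurableSpace X]
  {F : Type*} [NormedAddCommGroup F] [NormedSpace ℂ F] [CompleteSpace F]
  {B : BanachFunctionSpace X F}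

theorem IsSolid.norm_le (hB : B.IsSolid) {f g : F}
    (h : ∀ x, ‖B.toFunL g x‖ ≤ ‖B.toFunL f x‖) : ‖g‖ ≤ ‖f‖ := by
  obtain ⟨g', hg', hle⟩ := hB f _ (B.measurable' g) h
  rwa [B.injective hg'] at hle

variable {α : X ≃ X} {w : X → ℝ} {T : F →L[ℂ] F}

theorem norm_weightedTranslation_le_one (hsolid : B.IsSolid) (hinv : B.IsInvariant α)
    (hT : ∀ (f : F) (x : X), B.toFunL (T f) x = (w x : ℂ) * B.toFunL f (α x))
    (hw : ∀ x, |w x| ≤ 1) : ‖T‖ ≤ 1 := by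
  refine T.opNorm_le_bound zero_le_one fun f => ?_
  obtain ⟨g, hg, hgf⟩ := (hinv f).1
  rw [one_mul, ← hgf]
  refine hsolid.norm_le fun x => ?_
  rw [hT, hg, norm_mul, Complex.norm_real, Real.norm_eq_abs, Function.comp_apply]
  exact mul_le_of_le_one_left (norm_nonneg _) (hw x)

theorem norm_weightedTranslation_inverse_le_one (hsolid : B.IsSolid) (hinv : B.IsInvariant α)
    (hT : ∀ (f : F) (x : X), B.toFunL (T f) x = (w x : ℂ) * B.toFunL f (α x))
    {S : F →L[ℂ] F} (hTS : ∀ f : F, T (S f) = f) (hw : ∀ x, 1 ≤ |w x|) : ‖S‖ ≤ 1 := by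
  refine S.opNorm_le_bound zero_le_one fun f => ?_
  obtain ⟨g, hg, hgf⟩ := (hinv f).2
  rw [one_mul, ← hgf]
  refine hsolid.norm_le fun x => ?_
  have hx := hT (S f) (α.symm x)
  rw [hTS, α.apply_symm_apply] at hx
  rw [hg, Function.comp_apply, hx, norm_mul, Complex.norm_real, Real.norm_eq_abs]
  exact le_mul_of_one_le_left (norm_nonneg _) (hw _)

end BanachFunctionSpace

theorem stmt9_general {X : Type*} [TopologicalSpace X] [MeasurableSpace X]
    {F : Type*} [NormedAddCommGroup F] [NormedSpace ℂ F] [CompleteSpace F]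
    (B : BanachFunctionSpace X F) (α : X ≃ X)
    (hΩ : B.ConditionOmega α)
    (w : X → ℝ) (hw : IsWeightPair w) (T : F →L[ℂ] F)
    (hT : ∀ (f : F) (x : X), B.toFunL (T f) x = (w x : ℂ) * B.toFunL f (α x)) (S : F →L[ℂ] F) (hST : ∀ f : F, S (T f) = f) (hTS : ∀ f : F, T (S f) = f)
    (K : Set X) (hK : IsCompact K) (hKne : K.Nonempty)
    (hchaos : IsChaotic fun n => adjOp (cosOp T S n)) :
    (⨅ x, w x) < 1 ∧ 1 < ⨆ x, w x := by
  obtain ⟨hsolid, hinv, hind, -⟩ := hΩ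
  obtain ⟨-, ⟨C, hC⟩, c, hc, hcw⟩ := hw
  have : Nontrivial F := by
    obtain ⟨χK, hχK⟩ := hind K hK
    obtain ⟨x, hx⟩ := hKne
    exact ⟨χK, 0, fun h => by simpa [h, hx] using congrFun hχK x⟩
  have : Nonempty X := ⟨hKne.some⟩
  have hST' : S * T = 1 := ContinuousLinearMap.ext hST
  have hTS' : T * S = 1 := ContinuousLinearMap.ext hTS
  constructor
  · by_contra! h
    have hw : ∀ x, 1 ≤ |w x| := fun x =>
      ((le_ciInf_iff ⟨c, Set.forall_mem_range.mpr hcw⟩).mp h x).trans (le_abs_self _)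
    exact not_isChaotic_adjOp_cosOp hST' hTS'
      (BanachFunctionSpace.norm_weightedTranslation_inverse_le_one hsolid hinv hT hTS hw) hchaos
  · by_contra! h
    have hw : ∀ x, |w x| ≤ 1 := fun x => by
      rw [abs_of_pos (hc.trans_le (hcw x))]
      exact (ciSup_le_iff ⟨C, Set.forall_mem_range.mpr hC⟩).mp h x
    refine not_isChaotic_adjOp_cosOp hTS' hST'
      (BanachFunctionSpace.norm_weightedTranslation_le_one hsolid hinv hT hw) ?_
    simpa only [cosOp_comm] using hchaos

/-- if the adjoint cosine operator sequence is chaotic on the dual space,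
then `inf w < 1 < sup w`. -/
theorem stmt9 {X : Type*} [TopologicalSpace X] [MeasurableSpace X] [BorelSpace X]
    {F : Type*} [NormedAddCommGroup F] [NormedSpace ℂ F] [CompleteSpace F]
    (B : BanachFunctionSpace X F) (α : X ≃ X)
    (hmα : Measurable (⇑α)) (hmαs : Measurable (⇑α.symm))
    (hΩ : B.ConditionOmega α)
    (w : X → ℝ) (hw : IsWeightPair w) (T : F →L[ℂ] F)
    (hT : ∀ (f : F) (x : X), B.toFunL (T f) x = (w x : ℂ) * B.toFunL f (α x)) (S : F →L[ℂ] F) (hST : ∀ f : F, S (T f) = f) (hTS : ∀ f : F, T (S f) = f)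
    (K : Set X) (hK : IsCompact K) (hKne : K.Nonempty)
    (N : ℕ) (hN : 0 < N) (hdisj : ∀ n ≥ N, (⇑α)^[n] '' K ∩ K = ∅)
    (hchaos : IsChaotic fun n => adjOp (cosOp T S n)) :
    (⨅ x, w x) < 1 ∧ 1 < ⨆ x, w x :=
  stmt9_general B α hΩ w hw T hT S hST hTS K hK hKne hchaos
end
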